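/- arXiv:2506.02980 — 3 statements merged into one kernel-verified Lean document; each statement's English description precedes it below -/
import Mathlib

section
/- Let Θ ⊆ ℝ^d be convex and suppose Θ contains a closed Euclidean ball of radius r > 0 centered at c_r. Let f: Θ → ℝ be convex with |f(x)| ≤ 1 on Θ. Let u, c_u ∈ Θ with ‖u − c_u‖ ≤ P/2 for some P > 0. Define α₀ = 2r/(P + 2r) and v = α₀ c_u + (1−α₀) c_r. Then v ∈ Θ, the point u' = c_r + (α₀/(1−α₀))(c_u − u) lies in Θ, and f(v) ≤ f(u) + P/r. -/
/-!
Write `u' = c_r + t • (c_u - u)` with `t = α₀ / (1 - α₀) = 2r / P`; then `‖u' - c_r‖ ≤ t · P/2 = r`,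
so `u'` lies in the ball and hence in `Θ`. The shift is chosen so that
`v = α₀ • c_u + (1 - α₀) • c_r = α₀ • u + (1 - α₀) • u'`, and convexity of `f` together with
`|f| ≤ 1` gives `f v ≤ f u + 2 (1 - α₀) = f u + 2P / (P + 2r) ≤ f u + P / r`.
-/

open Metric

lemma add_smul_mem_closedBall_of_norm_le {E : Type*} [SeminormedAddCommGroup E] [NormedSpace ℝ E]
    (c : E) {x : E} {t ρ : ℝ} (ht : 0 ≤ t) (hx : ‖x‖ ≤ ρ) :
    c + t • x ∈ closedBall c (t * ρ) := by
  rw [mem_closedBall, dist_eq_norm, add_sub_cancel_left, norm_smul, Real.norm_of_nonneg ht]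
  exact mul_le_mul_of_nonneg_left hx ht

lemma smul_add_one_sub_smul_eq_smul_add_one_sub_smul_shift {𝕜 M : Type*} [Field 𝕜]
    [AddCommGroup M] [Module 𝕜 M] {a : 𝕜} (ha : a ≠ 1) (x y c : M) :
    a • y + (1 - a) • c = a • x + (1 - a) • (c + (a / (1 - a)) • (y - x)) := by
  rw [smul_add, smul_smul, mul_div_cancel₀ _ (sub_ne_zero.mpr ha.symm)]
  module

lemma ConvexOn.le_add_of_abs_le {E : Type*} [AddCommGroup E] [Module ℝ E] {s : Set E}
    {f : E → ℝ} {M : ℝ} (hf : ConvexOn ℝ s f) (hM : ∀ z ∈ s, |f z| ≤ M) {x y : E}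
    (hx : x ∈ s) (hy : y ∈ s) {a : ℝ} (ha₀ : 0 ≤ a) (ha₁ : a ≤ 1) :
    f (a • x + (1 - a) • y) ≤ f x + 2 * M * (1 - a) := by
  have hosc : f y - f x ≤ 2 * M := by
    linarith [(abs_le.mp (hM x hx)).1, (abs_le.mp (hM y hy)).2]
  calc f (a • x + (1 - a) • y) ≤ a * f x + (1 - a) * f y :=
        hf.2 hx hy ha₀ (sub_nonneg.mpr ha₁) (add_sub_cancel a 1)
    _ = f x + (1 - a) * (f y - f x) := by ring
    _ ≤ f x + (1 - a) * (2 * M) := by gcongr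
    _ = f x + 2 * M * (1 - a) := by ring

theorem pathlength_comparator {d : ℕ} (Θ : Set (EuclideanSpace ℝ (Fin d)))
    (hΘ : Convex ℝ Θ) (r P : ℝ) (hr : 0 < r) (hP : 0 < P)
    (cr : EuclideanSpace ℝ (Fin d)) (hball : Metric.closedBall cr r ⊆ Θ)
    (f : EuclideanSpace ℝ (Fin d) → ℝ) (hconv : ConvexOn ℝ Θ f)
    (hbdd : ∀ x ∈ Θ, |f x| ≤ 1)
    (u cu : EuclideanSpace ℝ (Fin d)) (hu : u ∈ Θ) (hcu : cu ∈ Θ)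
    (hdist : ‖u - cu‖ ≤ P / 2) :
    let α₀ : ℝ := 2 * r / (P + 2 * r)
    let v := α₀ • cu + (1 - α₀) • cr
    let u' := cr + (α₀ / (1 - α₀)) • (cu - u)
    v ∈ Θ ∧ u' ∈ Θ ∧ f v ≤ f u + P / r := by
  intro α₀ v u'
  have hsum : P + 2 * r ≠ 0 := by positivity
  have hα₀ : 0 < α₀ := by positivity
  have h1α₀ : 1 - α₀ = P / (P + 2 * r) := by
    rw [one_sub_div hsum, add_sub_cancel_right]
  have hratio : α₀ / (1 - α₀) = 2 * r / P := by
    rw [h1α₀, div_div_div_cancel_right₀ hsum]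
  have hcr : cr ∈ Θ := hball (mem_closedBall_self hr.le)
  have hu' : u' ∈ Θ := hball <| by
    have hr' : 2 * r / P * (P / 2) = r := by field_simp
    simpa only [u', hratio, hr'] using add_smul_mem_closedBall_of_norm_le cr
      (by positivity : 0 ≤ 2 * r / P) (by rwa [norm_sub_rev] : ‖cu - u‖ ≤ P / 2)
  have hα₀1 : α₀ < 1 := by linarith [h1α₀ ▸ (by positivity : 0 < P / (P + 2 * r))]
  refine ⟨hΘ hcu hcr hα₀.le (by linarith) (by ring), hu', ?_⟩
  have hv : v = α₀ • u + (1 - α₀) • u' :=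
    smul_add_one_sub_smul_eq_smul_add_one_sub_smul_shift hα₀1.ne u cu cr
  calc f v ≤ f u + 2 * 1 * (1 - α₀) := hv ▸ hconv.le_add_of_abs_le hbdd hu hu' hα₀.le hα₀1.le
    _ = f u + 2 * P / (P + 2 * r) := by rw [h1α₀]; ring
    _ ≤ f u + P / r := by
      gcongr f u + ?_
      rw [div_le_div_iff₀ (by positivity) hr]
      nlinarith
end

section
/- Let f_1, …, f_L : Θ → ℝ be convex functions on a convex set Θ, and suppose the total variation ∑_{t=2}^L max_{z∈Θ}|f_t(z) − f_{t−1}(z)| ≤ Δ_s. Let f̄ = (1/L)∑_{t=1}^L f_t and let v ∈ argmin_{z∈Θ} f̄(z). Then for any comparator sequence u_1, …, u_L ∈ Θ: ∑_{t=1}^L (f_t(v) − f_t(u_t)) ≤ Δ_s · L. -/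
/-!
Chaining the one-step bounds shows that any two of the functions differ by at most `Δs` at every
point of `Θ`, so `L f_t(u_t) ≥ ∑_s f_s(u_t) - L Δs ≥ ∑_s f_s(v) - L Δs` by minimality of `v`.
Summing over `t` gives `L ∑_t (f_t(v) - f_t(u_t)) ≤ L² Δs`.
-/

open Finset

theorem dist_le_sum_Icc_of_dist_pred_le {α : Type*} [PseudoMetricSpace α] {g : ℕ → α}
    {d : ℕ → ℝ} {L : ℕ} (hd : ∀ t ∈ Icc 2 L, dist (g t) (g (t - 1)) ≤ d t)
    {s t : ℕ} (hs : s ∈ Icc 1 L) (ht : t ∈ Icc 1 L) :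
    dist (g s) (g t) ≤ ∑ r ∈ Icc 2 L, d r := by
  wlog hst : s ≤ t generalizing s t
  · rw [dist_comm]
    exact this ht hs (le_of_not_ge hst)
  rw [mem_Icc] at hs ht
  have hstep : ∀ {k}, s ≤ k → k < t → dist (g k) (g (k + 1)) ≤ d (k + 1) :=
    fun {k} hsk hkt => by
      simpa [dist_comm] using hd (k + 1) (mem_Icc.mpr ⟨by omega, by omega⟩)
  calc dist (g s) (g t) ≤ ∑ k ∈ Ico s t, d (k + 1) := dist_le_Ico_sum_of_dist_le hst hstep
    _ = ∑ r ∈ Ico (s + 1) (t + 1), d r := sum_Ico_add' d s t 1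
    _ ≤ ∑ r ∈ Icc 2 L, d r := by
      refine sum_le_sum_of_subset_of_nonneg (fun r hr => ?_) fun r hr _ => ?_
      · rw [mem_Ico] at hr
        exact mem_Icc.mpr ⟨by omega, by omega⟩
      · exact dist_nonneg.trans (hd r hr)

theorem IsMinOn.sum_sub_le_mul_card {ι E : Type*} {S : Finset ι} {f : ι → E → ℝ} {Θ : Set E}
    {Δ : ℝ} {v : E} (hv : IsMinOn (fun z => ∑ s ∈ S, f s z) Θ v)
    (hvar : ∀ z ∈ Θ, ∀ s ∈ S, ∀ t ∈ S, f s z - f t z ≤ Δ) {u : ι → E}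
    (hu : ∀ t ∈ S, u t ∈ Θ) :
    ∑ t ∈ S, (f t v - f t (u t)) ≤ Δ * #S := by
  rcases S.eq_empty_or_nonempty with rfl | hS
  · simp
  have hcomparator : ∀ t ∈ S, ∑ s ∈ S, f s v - #S * Δ ≤ #S * f t (u t) := fun t ht => by
    have hspread : ∑ s ∈ S, (f s (u t) - f t (u t)) ≤ ∑ s ∈ S, Δ :=
      sum_le_sum fun s hs => hvar (u t) (hu t ht) s hs t ht
    simp only [sum_sub_distrib, sum_const, nsmul_eq_mul] at hspread
    linarith [isMinOn_iff.mp hv (u t) (hu t ht)]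
  have hsummed := sum_le_sum hcomparator
  simp only [sum_sub_distrib, sum_const, nsmul_eq_mul, ← mul_sum] at hsummed
  have hcard : (0 : ℝ) < #S := by exact_mod_cast hS.card_pos
  rw [sum_sub_distrib]
  refine le_of_mul_le_mul_left ?_ hcard
  linarith

theorem total_variation_comparator_general {E : Type*}
    (Θ : Set E)
    (L : ℕ)
    (f : ℕ → E → ℝ)
    (Δs : ℝ) (d : ℕ → ℝ)
    (hd : ∀ t ∈ Finset.Icc 2 L, ∀ z ∈ Θ, |f t z - f (t - 1) z| ≤ d t)
    (hsum : ∑ t ∈ Finset.Icc 2 L, d t ≤ Δs)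
    (v : E)
    (hvmin : ∀ z ∈ Θ, (∑ t ∈ Finset.Icc 1 L, f t v) ≤ ∑ t ∈ Finset.Icc 1 L, f t z)
    (u : ℕ → E) (hu : ∀ t ∈ Finset.Icc 1 L, u t ∈ Θ) :
    ∑ t ∈ Finset.Icc 1 L, (f t v - f t (u t)) ≤ Δs * L := by
  have hvar : ∀ z ∈ Θ, ∀ s ∈ Icc 1 L, ∀ t ∈ Icc 1 L, f s z - f t z ≤ Δs :=
    fun z hz s hs t ht =>
      calc f s z - f t z ≤ dist (f s z) (f t z) := le_abs_self _
        _ ≤ ∑ r ∈ Icc 2 L, d r :=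
          dist_le_sum_Icc_of_dist_pred_le (g := fun t => f t z) (fun r hr => hd r hr z hz) hs ht
        _ ≤ Δs := hsum
  simpa using (isMinOn_iff.mpr hvmin).sum_sub_le_mul_card hvar hu

theorem total_variation_comparator {E : Type*} [AddCommGroup E] [Module ℝ E]
    (Θ : Set E) (hΘ : Convex ℝ Θ)
    (L : ℕ) (hL : 1 ≤ L)
    (f : ℕ → E → ℝ) (hconv : ∀ t ∈ Finset.Icc 1 L, ConvexOn ℝ Θ (f t))
    (Δs : ℝ) (d : ℕ → ℝ)
    (hd : ∀ t ∈ Finset.Icc 2 L, ∀ z ∈ Θ, |f t z - f (t - 1) z| ≤ d t)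
    (hsum : ∑ t ∈ Finset.Icc 2 L, d t ≤ Δs)
    (v : E) (hv : v ∈ Θ)
    (hvmin : ∀ z ∈ Θ, (∑ t ∈ Finset.Icc 1 L, f t v) ≤ ∑ t ∈ Finset.Icc 1 L, f t z)
    (u : ℕ → E) (hu : ∀ t ∈ Finset.Icc 1 L, u t ∈ Θ) :
    ∑ t ∈ Finset.Icc 1 L, (f t v - f t (u t)) ≤ Δs * L :=
  total_variation_comparator_general Θ L f Δs d hd hsum v hvmin u hu
end

section
/- Let λ > 0 and define step sizes μ_t = 1/(λ(t − r + 1)) for t = r, r+1, …, s. Consider projected gradient descent on a closed convex set K ⊆ ℝ^d: x_{t+1} = Π_K(x_t − μ_t g_t), where Π_K is the Euclidean projection and g_t ∈ ℝ^d with ‖g_t‖ ≤ G'. Then for every u ∈ K: 2∑_{t=r}^s ⟨x_t − u, g_t⟩ − λ∑_{t=r}^s ‖x_t − u‖² ≤ ∑_{t=r}^s μ_t ‖g_t‖² ≤ ((G')²/λ)(1 + log(s − r + 1)). -/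
/-!
Since `K` is convex and `x (t+1)` is a nearest point of `K` to `x t - μ t • g t`, the step does not
increase the distance to any `u ∈ K`. Expanding that inequality bounds `2⟪x t - u, g t⟫` by
`(‖x t - u‖² - ‖x (t+1) - u‖²) / μ t + μ t ‖g t‖²`. With `1 / μ t = λ (t - r + 1)` the first terms
telescope to at most `λ ∑ ‖x t - u‖²`, and the remaining sum is `G'² / λ` times a harmonic sum.
-/

open Finset RealInnerProductSpace

theorem sum_range_succ_mul_sub_succ (b : ℕ → ℝ) (n : ℕ) :
    ∑ k ∈ range n, ((k : ℝ) + 1) * (b k - b (k + 1)) = ∑ k ∈ range n, b k - n * b n := by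
  induction n with
  | zero => simp
  | succ n ih =>
    rw [sum_range_succ, ih, sum_range_succ]
    push_cast
    ring

theorem sum_range_inv_succ_le_one_add_log (n : ℕ) :
    ∑ k ∈ range n, 1 / ((k : ℝ) + 1) ≤ 1 + Real.log n := by
  simpa [harmonic] using harmonic_le_one_add_log n

section Descent

variable {E : Type*} [NormedAddCommGroup E] [InnerProductSpace ℝ E]

theorem Convex.norm_sub_le_of_forall_norm_sub_le {K : Set E} (hK : Convex ℝ K) {p v u : E}
    (hv : v ∈ K) (hu : u ∈ K) (hnearest : ∀ y ∈ K, ‖v - p‖ ≤ ‖y - p‖) :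
    ‖v - u‖ ≤ ‖p - u‖ := by
  have hinf : ‖p - v‖ = ⨅ w : K, ‖p - w‖ := by
    have : Nonempty K := ⟨⟨v, hv⟩⟩
    have hbdd : BddBelow (Set.range fun w : K => ‖p - w‖) :=
      ⟨0, by rintro _ ⟨w, rfl⟩; exact norm_nonneg _⟩
    refine le_antisymm (le_ciInf fun w => ?_) (ciInf_le hbdd ⟨v, hv⟩)
    simpa only [norm_sub_rev p] using hnearest w w.2
  have hobtuse : ⟪p - v, u - v⟫ ≤ 0 := (norm_eq_iInf_iff_real_inner_le_zero hK hv).mp hinf u hu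
  have hexpand : ‖p - u‖ ^ 2 = ‖p - v‖ ^ 2 - 2 * ⟪p - v, u - v⟫ + ‖u - v‖ ^ 2 := by
    rw [← norm_sub_sq_real, sub_sub_sub_cancel_right]
  rw [← sq_le_sq₀ (norm_nonneg _) (norm_nonneg _), norm_sub_rev v u, hexpand]
  linarith [sq_nonneg ‖p - v‖]

theorem two_inner_le_of_norm_sub_le {x x' g u : E} {μ : ℝ} (hμ : 0 < μ)
    (hstep : ‖x' - u‖ ≤ ‖x - μ • g - u‖) :
    2 * ⟪x - u, g⟫ ≤ (‖x - u‖ ^ 2 - ‖x' - u‖ ^ 2) / μ + μ * ‖g‖ ^ 2 := by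
  have hexpand : ‖x - μ • g - u‖ ^ 2 = ‖x - u‖ ^ 2 - 2 * μ * ⟪x - u, g⟫ + μ ^ 2 * ‖g‖ ^ 2 := by
    rw [sub_right_comm, norm_sub_sq_real, real_inner_smul_right, norm_smul, Real.norm_eq_abs,
      mul_pow, sq_abs]
    ring
  have hsq : ‖x' - u‖ ^ 2 ≤ ‖x - μ • g - u‖ ^ 2 := pow_le_pow_left₀ (norm_nonneg _) hstep 2
  rw [div_add' _ _ _ hμ.ne', le_div_iff₀ hμ]
  linarith

theorem two_sum_inner_sub_le_of_step_inv_succ {lam : ℝ} (hlam : 0 < lam) (x g : ℕ → E) (u : E)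
    (hstep : ∀ k, ‖x (k + 1) - u‖ ≤ ‖x k - (1 / (lam * (k + 1))) • g k - u‖) (n : ℕ) :
    2 * ∑ k ∈ range n, ⟪x k - u, g k⟫ - lam * ∑ k ∈ range n, ‖x k - u‖ ^ 2
      ≤ ∑ k ∈ range n, 1 / (lam * (k + 1)) * ‖g k‖ ^ 2 := by
  set b : ℕ → ℝ := fun k => ‖x k - u‖ ^ 2
  have hk : ∀ k ∈ range n, 2 * ⟪x k - u, g k⟫
      ≤ lam * (((k : ℝ) + 1) * (b k - b (k + 1))) + 1 / (lam * (k + 1)) * ‖g k‖ ^ 2 := by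
    intro k _
    have h := two_inner_le_of_norm_sub_le (by positivity) (hstep k)
    rw [div_div_eq_mul_div, div_one] at h
    linarith
  have hsum := sum_le_sum hk
  rw [← mul_sum, sum_add_distrib, ← mul_sum, sum_range_succ_mul_sub_succ] at hsum
  have hlast : 0 ≤ lam * (n * b n) := by positivity
  linarith

theorem sum_inv_succ_mul_sq_le {F : Type*} [SeminormedAddCommGroup F] {lam G' : ℝ}
    (hlam : 0 < lam) (g : ℕ → F) (n : ℕ) (hg : ∀ k ∈ range n, ‖g k‖ ≤ G') :
    ∑ k ∈ range n, 1 / (lam * (k + 1)) * ‖g k‖ ^ 2 ≤ G' ^ 2 / lam * (1 + Real.log n) := by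
  calc ∑ k ∈ range n, 1 / (lam * (k + 1)) * ‖g k‖ ^ 2
      ≤ ∑ k ∈ range n, G' ^ 2 / lam * (1 / ((k : ℝ) + 1)) := by
        refine sum_le_sum fun k hk => ?_
        have hgk : ‖g k‖ ^ 2 ≤ G' ^ 2 := pow_le_pow_left₀ (norm_nonneg _) (hg k hk) 2
        calc 1 / (lam * (k + 1)) * ‖g k‖ ^ 2 ≤ 1 / (lam * (k + 1)) * G' ^ 2 := by gcongr
          _ = G' ^ 2 / lam * (1 / ((k : ℝ) + 1)) := by field_simp
    _ ≤ G' ^ 2 / lam * (1 + Real.log n) := by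
        rw [← mul_sum]
        gcongr
        exact sum_range_inv_succ_le_one_add_log n

end Descent

theorem projected_gd_strongly_convex_general {d : ℕ}
    (K : Set (EuclideanSpace ℝ (Fin d))) (hK : Convex ℝ K)
    (lam G' : ℝ) (hlam : 0 < lam)
    (r s : ℕ) (hrs : r ≤ s)
    (x g : ℕ → EuclideanSpace ℝ (Fin d))
    (hx : ∀ t, x t ∈ K)
    (hg : ∀ t ∈ Finset.Icc r s, ‖g t‖ ≤ G')
    (μ : ℕ → ℝ) (hμ : ∀ t, μ t = 1 / (lam * ((t - r : ℕ) + 1)))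
    (hproj : ∀ t, ∀ y ∈ K,
      ‖x (t + 1) - (x t - μ t • g t)‖ ≤ ‖y - (x t - μ t • g t)‖)
    (u : EuclideanSpace ℝ (Fin d)) (hu : u ∈ K) :
    2 * ∑ t ∈ Finset.Icc r s, (inner ℝ (x t - u) (g t) : ℝ)
        - lam * ∑ t ∈ Finset.Icc r s, ‖x t - u‖^2
      ≤ ∑ t ∈ Finset.Icc r s, μ t * ‖g t‖^2 ∧
    ∑ t ∈ Finset.Icc r s, μ t * ‖g t‖^2
      ≤ G'^2 / lam * (1 + Real.log ((s - r : ℕ) + 1)) := by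
  have hreindex : ∀ f : ℕ → ℝ, ∑ t ∈ Icc r s, f t = ∑ k ∈ range (s - r + 1), f (r + k) := by
    intro f
    rw [← Ico_add_one_right_eq_Icc, sum_Ico_eq_sum_range, Nat.sub_add_comm hrs]
  have hμ' : ∀ k, μ (r + k) = 1 / (lam * (k + 1)) := fun k => by simp [hμ]
  have hstep : ∀ k, ‖x (r + k + 1) - u‖ ≤ ‖x (r + k) - (1 / (lam * (k + 1))) • g (r + k) - u‖ :=
    fun k => hμ' k ▸ hK.norm_sub_le_of_forall_norm_sub_le (hx _) hu (hproj (r + k))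
  have hgk : ∀ k ∈ range (s - r + 1), ‖g (r + k)‖ ≤ G' := fun k hk =>
    hg _ (mem_Icc.mpr ⟨by omega, by rw [mem_range] at hk; omega⟩)
  have hbound := sum_inv_succ_mul_sq_le hlam (fun k => g (r + k)) (s - r + 1) hgk
  simp only [hreindex, hμ']
  push_cast at hbound
  exact ⟨two_sum_inner_sub_le_of_step_inv_succ hlam (fun k => x (r + k)) (fun k => g (r + k)) u
    hstep _, hbound⟩

theorem projected_gd_strongly_convex {d : ℕ}
    (K : Set (EuclideanSpace ℝ (Fin d))) (hK : Convex ℝ K) (hKc : IsClosed K)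
    (lam G' : ℝ) (hlam : 0 < lam) (hG' : 0 ≤ G')
    (r s : ℕ) (hrs : r ≤ s)
    (x g : ℕ → EuclideanSpace ℝ (Fin d))
    (hx : ∀ t, x t ∈ K)
    (hg : ∀ t ∈ Finset.Icc r s, ‖g t‖ ≤ G')
    (μ : ℕ → ℝ) (hμ : ∀ t, μ t = 1 / (lam * ((t - r : ℕ) + 1)))
    (hproj : ∀ t, ∀ y ∈ K,
      ‖x (t + 1) - (x t - μ t • g t)‖ ≤ ‖y - (x t - μ t • g t)‖)
    (u : EuclideanSpace ℝ (Fin d)) (hu : u ∈ K) :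
    2 * ∑ t ∈ Finset.Icc r s, (inner ℝ (x t - u) (g t) : ℝ)
        - lam * ∑ t ∈ Finset.Icc r s, ‖x t - u‖^2
      ≤ ∑ t ∈ Finset.Icc r s, μ t * ‖g t‖^2 ∧
    ∑ t ∈ Finset.Icc r s, μ t * ‖g t‖^2
      ≤ G'^2 / lam * (1 + Real.log ((s - r : ℕ) + 1)) :=
  projected_gd_strongly_convex_general K hK lam G' hlam r s hrs x g hx hg μ hμ hproj u hu
end
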